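/- arXiv:1804.01377 — 7 statements merged into one kernel-verified Lean document; each statement's English description precedes it below -/
import Mathlib

section
/- Let φ : ℝ → ℝ be convex on an interval [x₁, x₂] ⊂ ℝ with x₁ < x₂, and suppose φ is not affine on [x₁, x₂] (i.e., there is no pair α, β ∈ ℝ with φ(x) = αx + β for all x ∈ [x₁, x₂]). Then for every ξ with 0 < ξ < x₂ − x₁, φ(x₁ + ξ) + φ(x₂ − ξ) < φ(x₁) + φ(x₂). -/
/-!
Subtract the chord of `φ` over `[x₁, x₂]`: the difference `ψ` is convex and vanishes at both
endpoints, so `ψ ≤ 0` on the interval. Non-affinity gives a point where `ψ < 0`, and then convexity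
forces `ψ < 0` on the whole open interval. Since `(x₁ + ξ) + (x₂ - ξ) = x₁ + x₂`, the affine parts
cancel and the claim reads `ψ (x₁ + ξ) + ψ (x₂ - ξ) < 0`.
-/

open Set

section
variable {𝕜 : Type*} [Field 𝕜] [LinearOrder 𝕜] [IsStrictOrderedRing 𝕜] {f : 𝕜 → 𝕜} {x₁ x₂ : 𝕜}

theorem ConvexOn.nonpos_of_nonpos_endpoints (hf : ConvexOn 𝕜 (Icc x₁ x₂) f) (h₁ : f x₁ ≤ 0)
    (h₂ : f x₂ ≤ 0) {x : 𝕜} (hx : x ∈ Icc x₁ x₂) : f x ≤ 0 :=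
  have hx₁₂ := hx.1.trans hx.2
  (hf.le_on_segment (left_mem_Icc.2 hx₁₂) (right_mem_Icc.2 hx₁₂)
    (by rwa [segment_eq_Icc hx₁₂])).trans (max_le h₁ h₂)

theorem ConvexOn.neg_on_Ioo_of_neg (hf : ConvexOn 𝕜 (Icc x₁ x₂) f) (h₁ : f x₁ ≤ 0)
    (h₂ : f x₂ ≤ 0) {c : 𝕜} (hc : c ∈ Icc x₁ x₂) (hfc : f c < 0) {x : 𝕜} (hx : x ∈ Ioo x₁ x₂) :
    f x < 0 := by
  by_contra! hfx
  have hx₁₂ : x₁ ≤ x₂ := hc.1.trans hc.2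
  rcases lt_trichotomy c x with hcx | rfl | hxc
  · have : f x < f x₂ := hf.lt_right_of_left_lt hc (right_mem_Icc.2 hx₁₂)
      (by rw [openSegment_eq_Ioo (hcx.trans hx.2)]; exact ⟨hcx, hx.2⟩) (hfc.trans_le hfx)
    exact (this.trans_le h₂).not_ge hfx
  · exact hfc.not_ge hfx
  · have : f x < f x₁ := hf.lt_left_of_right_lt (left_mem_Icc.2 hx₁₂) hc
      (by rw [openSegment_eq_Ioo (hx.1.trans hxc)]; exact ⟨hx.1, hxc⟩) (hfc.trans_le hfx)
    exact (this.trans_le h₁).not_ge hfx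

end

theorem stmt_0_general (φ : ℝ → ℝ) (x₁ x₂ : ℝ)
    (hconv : ConvexOn ℝ (Set.Icc x₁ x₂) φ)
    (hnonaff : ¬ ∃ α β : ℝ, ∀ x ∈ Set.Icc x₁ x₂, φ x = α * x + β) :
    ∀ ξ : ℝ, 0 < ξ → ξ < x₂ - x₁ →
      φ (x₁ + ξ) + φ (x₂ - ξ) < φ x₁ + φ x₂ := by
  intro ξ hξ hξ'
  set α := slope φ x₁ x₂
  set β := φ x₁ - α * x₁
  set ψ : ℝ → ℝ := fun x ↦ φ x - (α * x + β)
  have hψ : ConvexOn ℝ (Icc x₁ x₂) ψ :=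
    hconv.sub (((LinearMap.mul ℝ ℝ α).concaveOn hconv.1).add_const β)
  have hψ₁ : ψ x₁ = 0 := by simp [ψ, β]
  have hψ₂ : ψ x₂ = 0 := by
    have := sub_smul_slope φ x₁ x₂
    simp only [ψ, β, smul_eq_mul, vsub_eq_sub] at this ⊢
    linear_combination -this
  obtain ⟨c, hc, hψc_ne⟩ : ∃ c ∈ Icc x₁ x₂, ψ c ≠ 0 := by
    push Not at hnonaff
    obtain ⟨c, hc, hne⟩ := hnonaff α β
    exact ⟨c, hc, sub_ne_zero.2 hne⟩
  have hψc : ψ c < 0 := (hψ.nonpos_of_nonpos_endpoints hψ₁.le hψ₂.le hc).lt_of_ne hψc_ne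
  have hleft : ψ (x₁ + ξ) < 0 :=
    hψ.neg_on_Ioo_of_neg hψ₁.le hψ₂.le hc hψc ⟨by linarith, by linarith⟩
  have hright : ψ (x₂ - ξ) ≤ 0 :=
    hψ.nonpos_of_nonpos_endpoints hψ₁.le hψ₂.le ⟨by linarith, by linarith⟩
  have hsum : ψ (x₁ + ξ) + ψ (x₂ - ξ) = φ (x₁ + ξ) + φ (x₂ - ξ) - (φ x₁ + φ x₂) := by
    simp only [ψ]; linear_combination hψ₁ + hψ₂
  linarith

/-- Lemma 1: a convex, non-affine function on `[x₁, x₂]` satisfies a strict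
exchange inequality. -/
theorem stmt_0 (φ : ℝ → ℝ) (x₁ x₂ : ℝ) (hx : x₁ < x₂)
    (hconv : ConvexOn ℝ (Set.Icc x₁ x₂) φ)
    (hnonaff : ¬ ∃ α β : ℝ, ∀ x ∈ Set.Icc x₁ x₂, φ x = α * x + β) :
    ∀ ξ : ℝ, 0 < ξ → ξ < x₂ - x₁ →
      φ (x₁ + ξ) + φ (x₂ - ξ) < φ x₁ + φ x₂ :=
  stmt_0_general φ x₁ x₂ hconv hnonaff
end

section
/- Consider the optimization problem: minimize over w ∈ ℝ^{n_w} and y₁,…,y_N ∈ ℝ the objective γ(w) + φ(Z₀) + Σ_{r=1}^{N} [φ(y_r) − φ(Z_{r−1})], subject to Z_{r−1} ≤ y_r ≤ Z_r for r = 1,…,N and Ā·(Z₀ + Σ_{r=1}^{N}[y_r − Z_{r−1}]) + B̄ w ≤ C̄ componentwise. If (w*, y₁*,…,y_N*) is an optimizer (a feasible point attaining the minimum), then for every r ∈ {2,…,N}: if y_r* > Z_{r−1}, then y_s* = Z_s for all s = 1,…,r−1. -/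
/-!
Suppose `y*_s < Z_{s+1}` for some `s < r` while `y*_r > Z_r`. Shifting a small amount `ε` from
`y_r` to `y_s` keeps the point feasible (the constraint only sees `∑ y_t`), so optimality gives
`φ(a) + φ(b) ≤ φ(a + ε) + φ(b - ε)` for `a = y*_s`, `b = y*_r`. Convexity gives the reverse
inequality, and the resulting equality forces `φ` to be affine on `[a, b]`. The pieces `s` and
`s + 1` of `φ` then coincide with the same affine function on intervals of positive length, so
`h_s = 0` and `(f_s, g_s) = (f_{s+1}, g_{s+1})`, contradicting non-degeneracy.
-/

open Set Function

theorem ConvexOn.eq_zero_of_nonpos_of_nonneg_of_mem_Ioo {ψ : ℝ → ℝ} {a b x : ℝ}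
    (hψ : ConvexOn ℝ (Icc a b) ψ) (ha : ψ a ≤ 0) (hb : ψ b ≤ 0) (hx : x ∈ Ioo a b)
    (hψx : 0 ≤ ψ x) : ∀ y ∈ Icc a b, ψ y = 0 := by
  intro y hy
  have hab : a ≤ b := hy.1.trans hy.2
  have haI : a ∈ Icc a b := left_mem_Icc.2 hab
  have hbI : b ∈ Icc a b := right_mem_Icc.2 hab
  have hyle : ψ y ≤ 0 :=
    (hψ.le_on_segment haI hbI (by rwa [segment_eq_Icc hab])).trans (max_le ha hb)
  have hxy : ψ x ≤ ψ y := by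
    rcases le_total y x with hyx | hxy
    · exact hψ.le_left_of_right_le'' hy hbI hyx hx.2 (hb.trans hψx)
    · exact hψ.le_right_of_left_le'' haI hy hx.1 hxy (ha.trans hψx)
  linarith

theorem ConvexOn.exists_affine_of_add_le_add_inward {φ : ℝ → ℝ} {a b ε : ℝ}
    (hφ : ConvexOn ℝ (Icc a b) φ) (hε : 0 < ε) (hεab : ε < b - a)
    (hexch : φ a + φ b ≤ φ (a + ε) + φ (b - ε)) :
    ∃ p q : ℝ, ∀ y ∈ Icc a b, φ y = p * y + q := by
  set p := (φ b - φ a) / (b - a)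
  set q := φ a - p * a
  have hpb : p * b + q = φ b := by
    simp only [p, q]
    field_simp [show b - a ≠ 0 by linarith]
    ring
  have hψ : ConvexOn ℝ (Icc a b) (fun y => φ y - (p * y + q)) := by
    refine ((hφ.sub ((LinearMap.mul ℝ ℝ p).concaveOn (convex_Icc a b))).add_const (-q)).congr
      fun y _ => ?_
    simp only [Pi.add_apply, Pi.sub_apply, LinearMap.mul_apply']
    ring
  have hψb : φ (b - ε) - (p * (b - ε) + q) ≤ 0 := by
    have hbε : b - ε ∈ segment ℝ a b := by
      rw [segment_eq_Icc (by linarith)]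
      constructor <;> linarith
    have := hψ.le_on_segment (left_mem_Icc.2 (by linarith)) (right_mem_Icc.2 (by linarith)) hbε
    simpa [q, hpb] using this
  refine ⟨p, q, fun y hy => ?_⟩
  -- The line takes the same total value at `a, b` as at `a + ε, b - ε`, so `ψ (a + ε) ≥ 0`.
  have := hψ.eq_zero_of_nonpos_of_nonneg_of_mem_Ioo (by simp [q]) (by simp [hpb])
    (x := a + ε) ⟨by linarith, by linarith⟩ (by linarith) y hy
  linarith

theorem quadratic_coeffs_eq_of_eqOn_Icc {h f g p q u v : ℝ} (huv : u < v)
    (H : ∀ z ∈ Icc u v, h / 2 * z ^ 2 + f * z + g = p * z + q) :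
    h = 0 ∧ f = p ∧ g = q := by
  have e₁ := H u ⟨le_rfl, huv.le⟩
  have e₂ := H v ⟨huv.le, le_rfl⟩
  have e₃ := H ((u + v) / 2) ⟨by linarith, by linarith⟩
  have huv' : u - v ≠ 0 := sub_ne_zero.2 huv.ne
  have hh : h = 0 := by
    have : h * (u - v) ^ 2 = 0 := by linear_combination 4 * (e₁ + e₂ - 2 * e₃)
    simpa [huv'] using this
  subst hh
  have hf : f = p := by
    have : (f - p) * (u - v) = 0 := by linear_combination e₁ - e₂
    simpa [huv', sub_eq_zero] using this
  subst hf
  exact ⟨rfl, rfl, by linarith⟩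

theorem quadratic_pieces_eq_of_affine_across {φ : ℝ → ℝ} {h₁ f₁ g₁ h₂ f₂ g₂ z₀ z₁ z₂ a b p q : ℝ}
    (hφ₁ : ∀ z ∈ Icc z₀ z₁, φ z = h₁ / 2 * z ^ 2 + f₁ * z + g₁)
    (hφ₂ : ∀ z ∈ Icc z₁ z₂, φ z = h₂ / 2 * z ^ 2 + f₂ * z + g₂)
    (hz₁₂ : z₁ < z₂) (ha₀ : z₀ ≤ a) (ha₁ : a < z₁) (hb₁ : z₁ < b)
    (hpq : ∀ y ∈ Icc a b, φ y = p * y + q) :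
    h₁ = 0 ∧ f₁ = f₂ ∧ g₁ = g₂ := by
  obtain ⟨hh₁, hf₁, hg₁⟩ := quadratic_coeffs_eq_of_eqOn_Icc ha₁ fun z hz =>
    (hφ₁ z ⟨ha₀.trans hz.1, hz.2⟩).symm.trans (hpq z ⟨hz.1, hz.2.trans hb₁.le⟩)
  obtain ⟨-, hf₂, hg₂⟩ := quadratic_coeffs_eq_of_eqOn_Icc (lt_min hb₁ hz₁₂) fun z hz =>
    (hφ₂ z ⟨hz.1, hz.2.trans (min_le_right _ _)⟩).symm.trans
      (hpq z ⟨ha₁.le.trans hz.1, hz.2.trans (min_le_left _ _)⟩)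
  exact ⟨hh₁, hf₁.trans hf₂.symm, hg₁.trans hg₂.symm⟩

theorem Finset.sum_update_update_sub {ι α M : Type*} [DecidableEq ι] [AddCommGroup M]
    {I : Finset ι} {i j : ι} (hi : i ∈ I) (hj : j ∈ I) (hij : i ≠ j) (F : ι → α → M)
    (y : ι → α) (a b : α) :
    ∑ t ∈ I, F t (update (update y i a) j b t) - ∑ t ∈ I, F t (y t) =
      F i a - F i (y i) + (F j b - F j (y j)) := by
  rw [← sum_sub_distrib, sum_eq_add_of_mem i j hi hj hij]
  · simp [update_of_ne hij]
  · rintro t - ⟨hti, htj⟩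
    simp [hti, htj]

def IsFeasible {nw mdim : ℕ} (N : ℕ) (Z : ℕ → ℝ) (A : Fin mdim → ℝ)
    (B : Matrix (Fin mdim) (Fin nw) ℝ) (C : Fin mdim → ℝ) (w : Fin nw → ℝ) (y : ℕ → ℝ) : Prop :=
  (∀ r, r < N → y r ∈ Icc (Z r) (Z (r + 1))) ∧
    ∀ j, A j * (Z 0 + ∑ r ∈ Finset.range N, (y r - Z r)) + B.mulVec w j ≤ C j

theorem IsFeasible.update_update {nw mdim N : ℕ} {Z : ℕ → ℝ} {A : Fin mdim → ℝ}
    {B : Matrix (Fin mdim) (Fin nw) ℝ} {C : Fin mdim → ℝ} {w : Fin nw → ℝ} {y : ℕ → ℝ}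
    (hy : IsFeasible N Z A B C w y) {s r : ℕ} (hs : s < N) (hr : r < N) (hsr : s ≠ r) {ε : ℝ}
    (hε : 0 ≤ ε) (hεs : y s + ε ≤ Z (s + 1)) (hεr : Z r ≤ y r - ε) :
    IsFeasible N Z A B C w (update (update y s (y s + ε)) r (y r - ε)) := by
  have hsum := Finset.sum_update_update_sub (Finset.mem_range.2 hs) (Finset.mem_range.2 hr) hsr
    (fun t x => x - Z t) y (y s + ε) (y r - ε)
  refine ⟨fun t ht => ?_, fun j => ?_⟩
  · have := hy.1 t ht
    rcases eq_or_ne t r with rfl | htr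
    · simp only [update_self, mem_Icc] at this ⊢
      constructor <;> linarith
    rcases eq_or_ne t s with rfl | hts
    · simp only [update_of_ne htr, update_self, mem_Icc] at this ⊢
      constructor <;> linarith
    · simpa [htr, hts] using this
  · convert hy.2 j using 4
    linarith

/-- Indices are 0-based: piece `r` of `φ` lives on `[Z r, Z (r+1)]` for `r < N`. -/
theorem stmt_1_general
    (nw mdim N : ℕ)
    (γ : (Fin nw → ℝ) → ℝ)
    (Z : ℕ → ℝ) (hZ : ∀ r, r < N → Z r < Z (r + 1))
    (φ : ℝ → ℝ)
    (hφconv : ConvexOn ℝ (Set.Icc (Z 0) (Z N)) φ)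
    (h f g : ℕ → ℝ)
    (hpw : ∀ r, r < N → ∀ z ∈ Set.Icc (Z r) (Z (r + 1)),
      φ z = h r / 2 * z ^ 2 + f r * z + g r)
    (hnondeg : ∀ r, r + 1 < N → 0 < h r ∨ (f r, g r) ≠ (f (r + 1), g (r + 1)))
    (A : Fin mdim → ℝ) (B : Matrix (Fin mdim) (Fin nw) ℝ) (C : Fin mdim → ℝ)
    (wstar : Fin nw → ℝ) (ystar : ℕ → ℝ)
    (hfeas : (∀ r, r < N → ystar r ∈ Set.Icc (Z r) (Z (r + 1))) ∧
      ∀ j, A j * (Z 0 + ∑ r ∈ Finset.range N, (ystar r - Z r)) + B.mulVec wstar j ≤ C j)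
    (hopt : ∀ (w : Fin nw → ℝ) (y : ℕ → ℝ),
      ((∀ r, r < N → y r ∈ Set.Icc (Z r) (Z (r + 1))) ∧
        ∀ j, A j * (Z 0 + ∑ r ∈ Finset.range N, (y r - Z r)) + B.mulVec w j ≤ C j) →
      γ wstar + φ (Z 0) + ∑ r ∈ Finset.range N, (φ (ystar r) - φ (Z r)) ≤
        γ w + φ (Z 0) + ∑ r ∈ Finset.range N, (φ (y r) - φ (Z r))) :
    ∀ r, 1 ≤ r → r < N → Z r < ystar r → ∀ s, s < r → ystar s = Z (s + 1) := by
  have hZmono : MonotoneOn Z (Set.Iic N) := (strictMonoOn_Iic_of_lt_succ fun m hm => by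
    simpa [Order.succ_eq_add_one] using hZ m hm).monotoneOn
  have hZle : ∀ {i j}, i ≤ j → j ≤ N → Z i ≤ Z j := fun hij hj =>
    hZmono (Set.mem_Iic.2 (hij.trans hj)) (Set.mem_Iic.2 hj) hij
  intro r _ hrN hr s hsr
  by_contra hs
  have hsN : s < N := hsr.trans hrN
  set a := ystar s
  set b := ystar r
  obtain ⟨ha₀, ha₁⟩ := hfeas.1 s hsN
  obtain ⟨-, hb₁⟩ := hfeas.1 r hrN
  have ha : a < Z (s + 1) := lt_of_le_of_ne ha₁ hs
  have hZsr : Z (s + 1) ≤ Z r := hZle hsr hrN.le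
  set ε := min (Z (s + 1) - a) (b - Z r)
  have hε : 0 < ε := lt_min (by linarith) (by linarith)
  have hεa : ε ≤ Z (s + 1) - a := min_le_left _ _
  have hεb : ε ≤ b - Z r := min_le_right _ _
  have hexch : φ a + φ b ≤ φ (a + ε) + φ (b - ε) := by
    have hobj := hopt wstar _ (IsFeasible.update_update hfeas hsN hrN hsr.ne hε.le
      (by linarith) (by linarith))
    have hdiff := Finset.sum_update_update_sub (Finset.mem_range.2 hsN)
      (Finset.mem_range.2 hrN) hsr.ne (fun t x => φ x - φ (Z t)) ystar (a + ε) (b - ε)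
    linarith
  have hconv : ConvexOn ℝ (Icc a b) φ := hφconv.subset
    (Icc_subset_Icc (by linarith [hZle (Nat.zero_le s) hsN.le]) (by linarith [hZle hrN le_rfl]))
    (convex_Icc a b)
  obtain ⟨p, q, hpq⟩ := hconv.exists_affine_of_add_le_add_inward hε (by linarith) hexch
  obtain ⟨hh, hf, hg⟩ := quadratic_pieces_eq_of_affine_across (hpw s hsN) (hpw (s + 1) (by omega))
    (hZ (s + 1) (by omega)) ha₀ ha (by linarith) hpq
  rcases hnondeg s (by omega) with hpos | hne
  · exact hpos.ne' hh
  · exact hne (by rw [hf, hg])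

/-- Theorem 2(i): in the relaxed problem, if an optimizer has `y_r* > Z_{r-1}`
then all earlier variables stick to their upper bounds, `y_s* = Z_s`.
(Indices are 0-based: piece `r` lives on `[Z r, Z (r+1)]` for `r < N`.) -/
theorem stmt_1
    (nw mdim N : ℕ) (hN : 1 ≤ N)
    (γ : (Fin nw → ℝ) → ℝ) (hγ : ConvexOn ℝ Set.univ γ)
    (Z : ℕ → ℝ) (hZ : ∀ r, r < N → Z r < Z (r + 1))
    (φ : ℝ → ℝ)
    (hφconv : ConvexOn ℝ (Set.Icc (Z 0) (Z N)) φ)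
    (h f g : ℕ → ℝ)
    (hpw : ∀ r, r < N → ∀ z ∈ Set.Icc (Z r) (Z (r + 1)),
      φ z = h r / 2 * z ^ 2 + f r * z + g r)
    (hnondeg : ∀ r, r + 1 < N → 0 < h r ∨ (f r, g r) ≠ (f (r + 1), g (r + 1)))
    (A : Fin mdim → ℝ) (B : Matrix (Fin mdim) (Fin nw) ℝ) (C : Fin mdim → ℝ)
    (wstar : Fin nw → ℝ) (ystar : ℕ → ℝ)
    (hfeas : (∀ r, r < N → ystar r ∈ Set.Icc (Z r) (Z (r + 1))) ∧
      ∀ j, A j * (Z 0 + ∑ r ∈ Finset.range N, (ystar r - Z r)) + B.mulVec wstar j ≤ C j)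
    (hopt : ∀ (w : Fin nw → ℝ) (y : ℕ → ℝ),
      ((∀ r, r < N → y r ∈ Set.Icc (Z r) (Z (r + 1))) ∧
        ∀ j, A j * (Z 0 + ∑ r ∈ Finset.range N, (y r - Z r)) + B.mulVec w j ≤ C j) →
      γ wstar + φ (Z 0) + ∑ r ∈ Finset.range N, (φ (ystar r) - φ (Z r)) ≤
        γ w + φ (Z 0) + ∑ r ∈ Finset.range N, (φ (y r) - φ (Z r))) :
    ∀ r, 1 ≤ r → r < N → Z r < ystar r → ∀ s, s < r → ystar s = Z (s + 1) :=
  stmt_1_general nw mdim N γ Z hZ φ hφconv h f g hpw hnondeg A B C wstar ystar hfeas hopt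
end

section
/- Consider the relaxed problem: minimize over w ∈ ℝ^{n_w} and y₁,…,y_N ∈ ℝ the objective γ(w) + φ(Z₀) + Σ_{r=1}^{N} [φ(y_r) − φ(Z_{r−1})], subject to Z_{r−1} ≤ y_r ≤ Z_r for r = 1,…,N and Ā·(Z₀ + Σ_{r=1}^{N}[y_r − Z_{r−1}]) + B̄ w ≤ C̄ componentwise. Let (w*, y₁*,…,y_N*) be an optimizer of this problem and define z* := Z₀ + Σ_{r=1}^{N}[y_r* − Z_{r−1}]. Then (w*, z*) is an optimizer of the problem: minimize γ(w) + φ(z) over w ∈ ℝ^{n_w} and z ∈ ℝ subject to Z₀ ≤ z ≤ Z_N and Ā z + B̄ w ≤ C̄ componentwise; i.e., (w*, z*) is feasible for the latter problem and γ(w*) + φ(z*) ≤ γ(w) + φ(z) for every feasible (w, z). -/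
/-! Write `z(y) = Z₀ + Σ_r (y_r - Z_r)` for the point encoded by a relaxed-feasible `y`.
Its partial sums never pass `Z_k`, while `y_k ≥ Z_k`; since the increment of a convex
function over an interval of fixed length grows as the interval moves right, the relaxed
objective dominates `γ(w) + φ(z(y))`. Conversely, a feasible `z` is encoded by filling the
segments from the left, `y_r = max Z_r (min z Z_{r+1})`, and for this `y` the relaxed
objective telescopes to exactly `γ(w) + φ(z)`. -/

open Finset Set

lemma ConvexOn.add_le_add_of_le_of_add_eq {s : Set ℝ} {φ : ℝ → ℝ} (hφ : ConvexOn ℝ s φ)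
    {a b c d : ℝ} (ha : a ∈ s) (hd : d ∈ s) (hab : a ≤ b) (hac : a ≤ c)
    (hsum : a + d = b + c) :
    φ b + φ c ≤ φ a + φ d := by
  rcases (hab.trans (by linarith : b ≤ d)).eq_or_lt with had | had
  · obtain rfl : b = a := by linarith
    obtain rfl : c = b := by linarith
    rw [had]
  · have hda : 0 < d - a := sub_pos.2 had
    set t := (b - a) / (d - a)
    have ht0 : 0 ≤ t := div_nonneg (sub_nonneg.2 hab) hda.le
    have ht1 : 0 ≤ 1 - t := sub_nonneg.2 ((div_le_one hda).2 (by linarith))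
    -- `b` and `c` are the convex combinations of `a` and `d` with swapped weights
    have hb : (1 - t) • a + t • d = b := by simp only [smul_eq_mul, t]; field_simp; ring
    have hc : t • a + (1 - t) • d = c := by
      simp only [smul_eq_mul, t]; field_simp; linear_combination (d - a) * hsum
    have hφb := hφ.2 ha hd ht1 ht0 (by ring)
    have hφc := hφ.2 ha hd ht0 ht1 (by ring)
    rw [hb] at hφb
    rw [hc] at hφc
    simp only [smul_eq_mul] at hφb hφc
    linarith

lemma sub_max_min_eq {α β : Type*} [LinearOrder α] [AddGroup β] (F : α → β) {a b : α}
    (hab : a ≤ b) (z : α) :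
    F (max a (min z b)) - F a = F (min z b) - F (min z a) := by
  rcases le_total z a with hza | haz
  · rw [min_eq_left (hza.trans hab), max_eq_left hza, min_eq_left hza, sub_self, sub_self]
  · rw [min_eq_right haz, max_eq_right (le_min haz hab)]

lemma sum_range_sub_max_min {α β : Type*} [LinearOrder α] [AddCommGroup β] (F : α → β)
    {Z : ℕ → α} {N : ℕ} (hZ : ∀ r < N, Z r ≤ Z (r + 1)) {z : α} (h0 : Z 0 ≤ z)
    (hN : z ≤ Z N) :
    ∑ r ∈ range N, (F (max (Z r) (min z (Z (r + 1)))) - F (Z r)) = F z - F (Z 0) := by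
  rw [sum_congr rfl fun r hr ↦ sub_max_min_eq F (hZ r (mem_range.1 hr)) z,
    sum_range_sub (fun r ↦ F (min z (Z r))), min_eq_left hN, min_eq_right h0]

section PartialSums

variable {Z y : ℕ → ℝ} {N : ℕ}

lemma partial_sum_mem_Icc (hy : ∀ r < N, y r ∈ Icc (Z r) (Z (r + 1))) {k : ℕ} (hk : k ≤ N) :
    Z 0 + ∑ r ∈ range k, (y r - Z r) ∈ Icc (Z 0) (Z k) := by
  induction k with
  | zero => simp
  | succ n ih =>
    have hn : n < N := hk
    obtain ⟨hlo, hhi⟩ := ih hn.le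
    obtain ⟨hyl, hyu⟩ := hy n hn
    rw [sum_range_succ, ← add_assoc]
    constructor <;> linarith

lemma ConvexOn.map_partial_sum_le {φ : ℝ → ℝ} (hφ : ConvexOn ℝ (Icc (Z 0) (Z N)) φ)
    (hy : ∀ r < N, y r ∈ Icc (Z r) (Z (r + 1))) {k : ℕ} (hk : k ≤ N) :
    φ (Z 0 + ∑ r ∈ range k, (y r - Z r)) ≤
      φ (Z 0) + ∑ r ∈ range k, (φ (y r) - φ (Z r)) := by
  have hmono : MonotoneOn Z (Set.Iic N) :=
    monotoneOn_of_le_add_one ordConnected_Iic fun r _ _ hr ↦ (hy r hr).1.trans (hy r hr).2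
  induction k with
  | zero => simp
  | succ n ih =>
    have hn : n < N := hk
    obtain ⟨hlo, hhi⟩ := partial_sum_mem_Icc hy hn.le
    obtain ⟨hyl, hyu⟩ := hy n hn
    have hZ0n : Z 0 ≤ Z n := hmono (Nat.zero_le N) hn.le (Nat.zero_le n)
    have hZnN : Z (n + 1) ≤ Z N := hmono hn (le_refl N) hn
    have hshift := hφ.add_le_add_of_le_of_add_eq (d := y n) ⟨hlo, by linarith⟩
      ⟨by linarith, by linarith⟩ (le_add_of_nonneg_right (sub_nonneg.2 hyl)) hhi (by ring)
    rw [sum_range_succ, sum_range_succ, ← add_assoc]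
    linarith [ih hn.le]

end PartialSums

theorem stmt_3_general
    (nw mdim N : ℕ)
    (γ : (Fin nw → ℝ) → ℝ)
    (Z : ℕ → ℝ) (hZ : ∀ r, r < N → Z r < Z (r + 1))
    (φ : ℝ → ℝ)
    (hφconv : ConvexOn ℝ (Set.Icc (Z 0) (Z N)) φ)
    (A : Fin mdim → ℝ) (B : Matrix (Fin mdim) (Fin nw) ℝ) (C : Fin mdim → ℝ)
    (wstar : Fin nw → ℝ) (ystar : ℕ → ℝ)
    (hfeas : (∀ r, r < N → ystar r ∈ Set.Icc (Z r) (Z (r + 1))) ∧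
      ∀ j, A j * (Z 0 + ∑ r ∈ Finset.range N, (ystar r - Z r)) + B.mulVec wstar j ≤ C j)
    (hopt : ∀ (w : Fin nw → ℝ) (y : ℕ → ℝ),
      ((∀ r, r < N → y r ∈ Set.Icc (Z r) (Z (r + 1))) ∧
        ∀ j, A j * (Z 0 + ∑ r ∈ Finset.range N, (y r - Z r)) + B.mulVec w j ≤ C j) →
      γ wstar + φ (Z 0) + ∑ r ∈ Finset.range N, (φ (ystar r) - φ (Z r)) ≤
        γ w + φ (Z 0) + ∑ r ∈ Finset.range N, (φ (y r) - φ (Z r))) :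
    (Z 0 ≤ Z 0 + ∑ r ∈ Finset.range N, (ystar r - Z r) ∧
      Z 0 + ∑ r ∈ Finset.range N, (ystar r - Z r) ≤ Z N ∧
      ∀ j, A j * (Z 0 + ∑ r ∈ Finset.range N, (ystar r - Z r)) + B.mulVec wstar j ≤ C j) ∧
    ∀ (w : Fin nw → ℝ) (z : ℝ), Z 0 ≤ z → z ≤ Z N →
      (∀ j, A j * z + B.mulVec w j ≤ C j) →
      γ wstar + φ (Z 0 + ∑ r ∈ Finset.range N, (ystar r - Z r)) ≤ γ w + φ z := by
  obtain ⟨hystar, hAstar⟩ := hfeas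
  obtain ⟨hlo, hhi⟩ := partial_sum_mem_Icc hystar le_rfl
  refine ⟨⟨hlo, hhi, hAstar⟩, fun w z hz0 hzN hAz ↦ ?_⟩
  set y : ℕ → ℝ := fun r ↦ max (Z r) (min z (Z (r + 1)))
  have hZle : ∀ r < N, Z r ≤ Z (r + 1) := fun r hr ↦ (hZ r hr).le
  have hy : ∀ r < N, y r ∈ Icc (Z r) (Z (r + 1)) :=
    fun r hr ↦ ⟨le_max_left _ _, max_le (hZle r hr) (min_le_right _ _)⟩
  have hysum : ∑ r ∈ range N, (y r - Z r) = z - Z 0 := sum_range_sub_max_min id hZle hz0 hzN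
  have hφsum : ∑ r ∈ range N, (φ (y r) - φ (Z r)) = φ z - φ (Z 0) :=
    sum_range_sub_max_min φ hZle hz0 hzN
  have hrelax := hopt w y ⟨hy, by simpa only [hysum, add_sub_cancel] using hAz⟩
  linarith [hφconv.map_partial_sum_le hystar le_rfl]

/-- Theorem 2(iii): from an optimizer of the relaxed problem, the point
`z* = Z₀ + Σ_{r}(y_r* - Z_{r-1})` together with `w*` is an optimizer of the
original problem `min γ(w) + φ(z)` s.t. `Z₀ ≤ z ≤ Z_N`, `Ā z + B̄ w ≤ C̄`.
(Indices are 0-based: piece `r` lives on `[Z r, Z (r+1)]` for `r < N`.) -/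
theorem stmt_3
    (nw mdim N : ℕ) (hN : 1 ≤ N)
    (γ : (Fin nw → ℝ) → ℝ) (hγ : ConvexOn ℝ Set.univ γ)
    (Z : ℕ → ℝ) (hZ : ∀ r, r < N → Z r < Z (r + 1))
    (φ : ℝ → ℝ)
    (hφconv : ConvexOn ℝ (Set.Icc (Z 0) (Z N)) φ)
    (h f g : ℕ → ℝ)
    (hpw : ∀ r, r < N → ∀ z ∈ Set.Icc (Z r) (Z (r + 1)),
      φ z = h r / 2 * z ^ 2 + f r * z + g r)
    (hnondeg : ∀ r, r + 1 < N → 0 < h r ∨ (f r, g r) ≠ (f (r + 1), g (r + 1)))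
    (A : Fin mdim → ℝ) (B : Matrix (Fin mdim) (Fin nw) ℝ) (C : Fin mdim → ℝ)
    (wstar : Fin nw → ℝ) (ystar : ℕ → ℝ)
    (hfeas : (∀ r, r < N → ystar r ∈ Set.Icc (Z r) (Z (r + 1))) ∧
      ∀ j, A j * (Z 0 + ∑ r ∈ Finset.range N, (ystar r - Z r)) + B.mulVec wstar j ≤ C j)
    (hopt : ∀ (w : Fin nw → ℝ) (y : ℕ → ℝ),
      ((∀ r, r < N → y r ∈ Set.Icc (Z r) (Z (r + 1))) ∧
        ∀ j, A j * (Z 0 + ∑ r ∈ Finset.range N, (y r - Z r)) + B.mulVec w j ≤ C j) →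
      γ wstar + φ (Z 0) + ∑ r ∈ Finset.range N, (φ (ystar r) - φ (Z r)) ≤
        γ w + φ (Z 0) + ∑ r ∈ Finset.range N, (φ (y r) - φ (Z r))) :
    (Z 0 ≤ Z 0 + ∑ r ∈ Finset.range N, (ystar r - Z r) ∧
      Z 0 + ∑ r ∈ Finset.range N, (ystar r - Z r) ≤ Z N ∧
      ∀ j, A j * (Z 0 + ∑ r ∈ Finset.range N, (ystar r - Z r)) + B.mulVec wstar j ≤ C j) ∧
    ∀ (w : Fin nw → ℝ) (z : ℝ), Z 0 ≤ z → z ≤ Z N →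
      (∀ j, A j * z + B.mulVec w j ≤ C j) →
      γ wstar + φ (Z 0 + ∑ r ∈ Finset.range N, (ystar r - Z r)) ≤ γ w + φ z :=
  stmt_3_general nw mdim N γ Z hZ φ hφconv A B C wstar ystar hfeas hopt
end

section
/- Let n ≥ 1 and let b, d, a, l, u ∈ ℝⁿ with b_i > 0, d_i > 0, l_i ≤ u_i for all i, and let c ∈ ℝ satisfy Σ b_i l_i < c < Σ b_i u_i. Define x_i(λ) := clamp((a_i − λ b_i)/d_i, l_i, u_i) and g(λ) := Σ_{i=1}^{n} b_i x_i(λ), and set Λ* := {λ ∈ ℝ : g(λ) = c}. Then Λ* is a nonempty compact interval: there exist λ_l* ≤ λ_u* with Λ* = [λ_l*, λ_u*]. Moreover, g(λ) > c if and only if λ < λ_l*, and g(λ) < c if and only if λ > λ_u*. -/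
/-!
The dual function `g` is a finite sum of clamped affine functions with negative slope, so it is
continuous and antitone; it equals `∑ bᵢ lᵢ < c` for large `λ` and is at least `∑ bᵢ uᵢ > c` for
very negative `λ`. For any continuous antitone function crossing the level `c`, the level set is
nonempty (intermediate value theorem), closed and bounded, hence has a least element `λ_l*` and a
greatest element `λ_u*`; monotonicity then forces `g > c` exactly left of `λ_l*`, `g < c` exactly
right of `λ_u*`, and `g = c` in between.
-/

open Filter Set

section LevelSet

variable {α δ : Type*} [LinearOrder δ] {c : δ}

theorem Antitone.lt_apply_iff_of_isLeast [LinearOrder α] {g : α → δ} (hg : Antitone g) {L : α}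
    (hL : IsLeast {x | g x = c} L) (x : α) : c < g x ↔ x < L := by
  have hgL : g L = c := hL.1
  constructor
  · intro hx
    by_contra! hLx
    exact (hgL ▸ hg hLx).not_gt hx
  · intro hx
    refine lt_of_le_of_ne (hgL ▸ hg hx.le) fun hcx => ?_
    exact (hL.2 hcx.symm).not_gt hx

theorem Antitone.apply_lt_iff_of_isGreatest [LinearOrder α] {g : α → δ} (hg : Antitone g) {U : α}
    (hU : IsGreatest {x | g x = c} U) (x : α) : g x < c ↔ U < x := by
  have hgU : g U = c := hU.1
  constructor
  · intro hx
    by_contra! hxU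
    exact (hgU ▸ hg hxU).not_gt hx
  · intro hx
    refine lt_of_le_of_ne (hgU ▸ hg hx.le) fun hxc => ?_
    exact (hU.2 hxc).not_gt hx

variable [TopologicalSpace δ] [OrderClosedTopology δ]

theorem Antitone.exists_levelSet_eq_Icc [ConditionallyCompleteLinearOrder α] [TopologicalSpace α]
    [OrderTopology α] [DenselyOrdered α] {g : α → δ} (hg : Antitone g) (hgc : Continuous g)
    {x₀ x₁ : α} (h₀ : c < g x₀) (h₁ : g x₁ < c) :
    ∃ L U : α, L ≤ U ∧ {x | g x = c} = Icc L U ∧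
      (∀ x, c < g x ↔ x < L) ∧ (∀ x, g x < c ↔ U < x) := by
  have hx₀₁ : x₀ < x₁ := hg.reflect_lt (h₁.trans h₀)
  have hne : {x | g x = c}.Nonempty := by
    obtain ⟨x, -, hx⟩ := intermediate_value_Icc' hx₀₁.le hgc.continuousOn ⟨h₁.le, h₀.le⟩
    exact ⟨x, hx⟩
  have hsub : {x | g x = c} ⊆ Icc x₀ x₁ := fun x (hx : g x = c) =>
    ⟨(hg.reflect_lt (hx ▸ h₀)).le, (hg.reflect_lt (hx ▸ h₁)).le⟩
  have hcpt : IsCompact {x | g x = c} :=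
    isCompact_Icc.of_isClosed_subset (isClosed_singleton.preimage hgc) hsub
  obtain ⟨L, hL⟩ := hcpt.exists_isLeast hne
  obtain ⟨U, hU⟩ := hcpt.exists_isGreatest hne
  have hgt := hg.lt_apply_iff_of_isLeast hL
  have hlt := hg.apply_lt_iff_of_isGreatest hU
  refine ⟨L, U, hL.2 hU.1, ?_, hgt, hlt⟩
  ext x
  simp only [mem_ofPred_eq, mem_Icc, le_antisymm_iff (a := g x), ← not_lt, hgt, hlt]

end LevelSet

section Knapsack

variable {ι : Type*} [Fintype ι] {b d : ι → ℝ}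

theorem antitone_sum_clamp (hb : ∀ i, 0 < b i) (hd : ∀ i, 0 < d i) (a l u : ι → ℝ) :
    Antitone fun lam => ∑ i, b i * max (l i) (min ((a i - lam * b i) / d i) (u i)) := by
  intro x y hxy
  refine Finset.sum_le_sum fun i _ => mul_le_mul_of_nonneg_left ?_ (hb i).le
  have : (a i - y * b i) / d i ≤ (a i - x * b i) / d i := by
    gcongr
    exacts [(hd i).le, (hb i).le]
  exact max_le_max le_rfl (min_le_min this le_rfl)

theorem eventually_sum_clamp_eq_atTop (hb : ∀ i, 0 < b i) (hd : ∀ i, 0 < d i) (a l u : ι → ℝ) :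
    ∀ᶠ lam in atTop,
      ∑ i, b i * max (l i) (min ((a i - lam * b i) / d i) (u i)) = ∑ i, b i * l i := by
  have : ∀ᶠ lam in atTop, ∀ i, (a i - lam * b i) / d i ≤ l i := by
    refine eventually_all.2 fun i => ?_
    filter_upwards [eventually_ge_atTop ((a i - d i * l i) / b i)] with lam hlam
    rw [div_le_iff₀ (hb i)] at hlam
    rw [div_le_iff₀ (hd i)]
    linarith
  filter_upwards [this] with lam hlam
  exact Finset.sum_congr rfl fun i _ => by rw [max_eq_left ((min_le_left _ _).trans (hlam i))]

theorem eventually_sum_le_sum_clamp_atBot (hb : ∀ i, 0 < b i) (hd : ∀ i, 0 < d i)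
    (a l u : ι → ℝ) :
    ∀ᶠ lam in atBot,
      ∑ i, b i * u i ≤ ∑ i, b i * max (l i) (min ((a i - lam * b i) / d i) (u i)) := by
  have : ∀ᶠ lam in atBot, ∀ i, u i ≤ (a i - lam * b i) / d i := by
    refine eventually_all.2 fun i => ?_
    filter_upwards [eventually_le_atBot ((a i - d i * u i) / b i)] with lam hlam
    rw [le_div_iff₀ (hb i)] at hlam
    rw [le_div_iff₀ (hd i)]
    linarith
  filter_upwards [this] with lam hlam
  refine Finset.sum_le_sum fun i _ => mul_le_mul_of_nonneg_left ?_ (hb i).le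
  rw [min_eq_right (hlam i)]
  exact le_max_right _ _

end Knapsack

theorem stmt_10_general (n : ℕ) (b d a l u : Fin n → ℝ)
    (hb : ∀ i, 0 < b i) (hd : ∀ i, 0 < d i)
    (c : ℝ) (hcl : ∑ i, b i * l i < c) (hcu : c < ∑ i, b i * u i)
    (g : ℝ → ℝ)
    (hg : ∀ lam, g lam = ∑ i, b i * max (l i) (min ((a i - lam * b i) / d i) (u i))) :
    ∃ lamL lamU : ℝ, lamL ≤ lamU ∧
      {lam : ℝ | g lam = c} = Set.Icc lamL lamU ∧
      (∀ lam, c < g lam ↔ lam < lamL) ∧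
      (∀ lam, g lam < c ↔ lamU < lam) := by
  obtain rfl : g = _ := funext hg
  obtain ⟨x₀, hx₀⟩ := (eventually_sum_le_sum_clamp_atBot hb hd a l u).exists
  obtain ⟨x₁, hx₁⟩ := (eventually_sum_clamp_eq_atTop hb hd a l u).exists
  exact (antitone_sum_clamp hb hd a l u).exists_levelSet_eq_Icc (by fun_prop)
    (hcu.trans_le hx₀) (hx₁ ▸ hcl)

/-- The optimal dual set (14) of the continuous quadratic knapsack problem:
if `bᵀl < c < bᵀu`, then `Λ* = {λ : g(λ) = c}` is a nonempty compact interval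
`[λ_l*, λ_u*]`; moreover `g(λ) > c ↔ λ < λ_l*` and `g(λ) < c ↔ λ > λ_u*`. -/
theorem stmt_10 (n : ℕ) (hn : 1 ≤ n) (b d a l u : Fin n → ℝ)
    (hb : ∀ i, 0 < b i) (hd : ∀ i, 0 < d i) (hlu : ∀ i, l i ≤ u i)
    (c : ℝ) (hcl : ∑ i, b i * l i < c) (hcu : c < ∑ i, b i * u i)
    (g : ℝ → ℝ)
    (hg : ∀ lam, g lam = ∑ i, b i * max (l i) (min ((a i - lam * b i) / d i) (u i))) :
    ∃ lamL lamU : ℝ, lamL ≤ lamU ∧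
      {lam : ℝ | g lam = c} = Set.Icc lamL lamU ∧
      (∀ lam, c < g lam ↔ lam < lamL) ∧
      (∀ lam, g lam < c ↔ lamU < lam) :=
  stmt_10_general n b d a l u hb hd c hcl hcu g hg
end

section
/- Let n, m ≥ 1, let d, a, l, u ∈ ℝⁿ with d_i > 0 and l_i ≤ u_i for all i, let B ∈ ℝ^{m×n} with columns B_i ∈ ℝ^m, and let c ∈ ℝ^m. Suppose λ* ∈ ℝ^m is such that the point x* defined by x_i* := clamp((a_i − (λ*)ᵀB_i)/d_i, l_i, u_i) satisfies B x* = c. Then x* is a global minimizer of the problem: minimize ½ Σ_{i=1}^{n} d_i x_i² − Σ_{i=1}^{n} a_i x_i over all x ∈ ℝⁿ with l_i ≤ x_i ≤ u_i for all i and B x = c. -/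
/-!
Weak duality made exact: for every `x` with `B x = c` the objective equals the Lagrangian
at `λ*` minus the constant `λ* ⬝ c`, and the Lagrangian is separable. Its `i`-th term
`½ dᵢ t² − bᵢ t` (with `bᵢ = aᵢ − (λ*)ᵀBᵢ`) is a strictly convex parabola, whose minimum
over `[lᵢ, uᵢ]` is attained at the projection of its vertex `bᵢ / dᵢ`, which is `xᵢ*`.
-/

open Matrix

lemma clamp_sub_mul_sub_nonneg {v l u t : ℝ} (hl : l ≤ t) (hu : t ≤ u) :
    0 ≤ (max l (min v u) - v) * (t - max l (min v u)) := by
  rcases le_total v l with hvl | hlv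
  · rw [max_eq_left (min_le_of_left_le hvl)]
    exact mul_nonneg (sub_nonneg.2 hvl) (sub_nonneg.2 hl)
  rcases le_total v u with hvu | huv
  · simp [min_eq_left hvu, max_eq_right hlv]
  · rw [min_eq_right huv, max_eq_right (hl.trans hu)]
    exact mul_nonneg_of_nonpos_of_nonpos (sub_nonpos.2 huv) (sub_nonpos.2 hu)

lemma half_mul_sq_sub_mul_clamp_le {d b l u t : ℝ} (hd : 0 < d) (hl : l ≤ t) (hu : t ≤ u) :
    1 / 2 * d * max l (min (b / d) u) ^ 2 - b * max l (min (b / d) u) ≤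
      1 / 2 * d * t ^ 2 - b * t := by
  set s := max l (min (b / d) u)
  have hopt := clamp_sub_mul_sub_nonneg (v := b / d) hl hu
  have hb : b = d * (b / d) := by field_simp
  have hexpand : 1 / 2 * d * t ^ 2 - b * t - (1 / 2 * d * s ^ 2 - b * s) =
      d * ((s - b / d) * (t - s)) + d / 2 * (t - s) ^ 2 := by
    rw [hb]; field_simp; ring
  linarith [mul_nonneg hd.le hopt, mul_nonneg hd.le (sq_nonneg (t - s))]

lemma half_sum_sq_sub_sum_eq_sum_sub_dotProduct_mulVec {ι κ : Type*} [Fintype ι] [Fintype κ]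
    (d a x : ι → ℝ) (B : Matrix κ ι ℝ) (lam : κ → ℝ) :
    1 / 2 * ∑ i, d i * x i ^ 2 - ∑ i, a i * x i =
      ∑ i, (1 / 2 * d i * x i ^ 2 - (a i - (lam ᵥ* B) i) * x i) - lam ⬝ᵥ (B *ᵥ x) := by
  rw [dotProduct_mulVec, dotProduct, Finset.mul_sum, ← Finset.sum_sub_distrib,
    ← Finset.sum_sub_distrib]
  exact Finset.sum_congr rfl fun i _ => by ring

theorem stmt_12_general (n m : ℕ)
    (d a l u : Fin n → ℝ) (hd : ∀ i, 0 < d i) (hlu : ∀ i, l i ≤ u i)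
    (B : Matrix (Fin m) (Fin n) ℝ) (c : Fin m → ℝ)
    (lamstar : Fin m → ℝ) (xstar : Fin n → ℝ)
    (hx : ∀ i, xstar i =
      max (l i) (min ((a i - ∑ j, lamstar j * B j i) / d i) (u i)))
    (hcoup : B.mulVec xstar = c) :
    (∀ i, l i ≤ xstar i ∧ xstar i ≤ u i) ∧
    ∀ x : Fin n → ℝ, (∀ i, l i ≤ x i ∧ x i ≤ u i) → B.mulVec x = c →
      (1 / 2) * ∑ i, d i * xstar i ^ 2 - ∑ i, a i * xstar i ≤
        (1 / 2) * ∑ i, d i * x i ^ 2 - ∑ i, a i * x i := by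
  refine ⟨fun i => hx i ▸ ⟨le_max_left _ _, max_le (hlu i) (min_le_right _ _)⟩,
    fun x hxlu hxc => ?_⟩
  rw [half_sum_sq_sub_sum_eq_sum_sub_dotProduct_mulVec d a xstar B lamstar,
    half_sum_sq_sub_sum_eq_sum_sub_dotProduct_mulVec d a x B lamstar, hcoup, hxc]
  refine sub_le_sub_right (Finset.sum_le_sum fun i _ => ?_) _
  rw [hx i]
  exact half_mul_sq_sub_mul_clamp_le (hd i) (hxlu i).1 (hxlu i).2

/-- Correctness of the final step of the HPS algorithm: if `λ*` is such that
`x*` with `x_i* = clamp((a_i − (λ*)ᵀB_i)/d_i, l_i, u_i)` satisfies `Bx* = c`,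
then `x*` is a global minimizer of the multiply constrained continuous
quadratic knapsack problem (9). -/
theorem stmt_12 (n m : ℕ) (hn : 1 ≤ n) (hm : 1 ≤ m)
    (d a l u : Fin n → ℝ) (hd : ∀ i, 0 < d i) (hlu : ∀ i, l i ≤ u i)
    (B : Matrix (Fin m) (Fin n) ℝ) (c : Fin m → ℝ)
    (lamstar : Fin m → ℝ) (xstar : Fin n → ℝ)
    (hx : ∀ i, xstar i =
      max (l i) (min ((a i - ∑ j, lamstar j * B j i) / d i) (u i)))
    (hcoup : B.mulVec xstar = c) :
    (∀ i, l i ≤ xstar i ∧ xstar i ≤ u i) ∧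
    ∀ x : Fin n → ℝ, (∀ i, l i ≤ x i ∧ x i ≤ u i) → B.mulVec x = c →
      (1 / 2) * ∑ i, d i * xstar i ^ 2 - ∑ i, a i * xstar i ≤
        (1 / 2) * ∑ i, d i * x i ^ 2 - ∑ i, a i * x i :=
  stmt_12_general n m d a l u hd hlu B c lamstar xstar hx hcoup
end

section
/- Let φ : ℝ^m → ℝ be a concave function, let p ∈ ℝ^m with p ≠ 0 and p₀ ∈ ℝ, and let 𝒫 = {λ ∈ ℝ^m : p₀ + pᵀλ = 0} be a hyperplane. Suppose λ_𝒫 ∈ 𝒫 maximizes φ over 𝒫 (i.e., φ(μ) ≤ φ(λ_𝒫) for all μ ∈ 𝒫), and suppose there exists ε > 0 with φ(λ_𝒫 + ε p) > φ(λ_𝒫). Then every global maximizer λ* of φ over ℝ^m satisfies p₀ + pᵀλ* > 0. -/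
/-!
If a global maximizer `z` of the concave `φ` had `p₀ + pᵀz ≤ 0`, the segment from `z` to
`y = λ_𝒫 + ε p` (which satisfies `p₀ + pᵀy = ε ‖p‖² ≥ 0`) would cross the hyperplane at some `w`.
Concavity gives `φ y = min (φ z) (φ y) ≤ φ w ≤ φ λ_𝒫 < φ y`.
-/

open Set Matrix

theorem ConcaveOn.zero_lt_of_forall_le_of_lt {E : Type*} [AddCommGroup E] [Module ℝ E]
    {f : E → ℝ} (hf : ConcaveOn ℝ univ f) (ℓ : E →ᵃ[ℝ] ℝ) {c : ℝ} {y z : E}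
    (hℓ : ∀ w, ℓ w = 0 → f w ≤ c) (hy : 0 ≤ ℓ y) (hcy : c < f y) (hz : ∀ w, f w ≤ f z) :
    0 < ℓ z := by
  by_contra! hz0
  have hcross : (0 : ℝ) ∈ ℓ '' segment ℝ z y := by
    rw [image_segment, segment_eq_uIcc]
    exact mem_uIcc.2 (Or.inl ⟨hz0, hy⟩)
  obtain ⟨w, hw, hℓw⟩ := hcross
  have hmin : min (f z) (f y) ≤ f w := hf.min_le_of_mem_segment trivial trivial hw
  rw [min_eq_right (hz y)] at hmin
  exact (hcy.trans_le hmin).not_ge (hℓ w hℓw)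

theorem stmt_13_general (m : ℕ) (φ : (Fin m → ℝ) → ℝ)
    (hconc : ConcaveOn ℝ Set.univ φ)
    (p : Fin m → ℝ) (p0 : ℝ)
    (lamP : Fin m → ℝ) (hlamP : p0 + ∑ j, p j * lamP j = 0)
    (hmax : ∀ μ : Fin m → ℝ, p0 + ∑ j, p j * μ j = 0 → φ μ ≤ φ lamP)
    (ε : ℝ) (hε : 0 < ε) (hinc : φ lamP < φ (lamP + ε • p)) :
    ∀ lamstar : Fin m → ℝ, (∀ μ : Fin m → ℝ, φ μ ≤ φ lamstar) →
      0 < p0 + ∑ j, p j * lamstar j := by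
  intro lamstar hstar
  let ℓ : (Fin m → ℝ) →ᵃ[ℝ] ℝ :=
    AffineMap.const ℝ _ p0 + (dotProductBilin ℝ ℝ p).toAffineMap
  have hℓ (μ : Fin m → ℝ) : ℓ μ = p0 + p ⬝ᵥ μ := rfl
  have hpp : 0 ≤ p ⬝ᵥ p := Finset.sum_nonneg fun j _ => mul_self_nonneg (p j)
  have hy : 0 ≤ ℓ (lamP + ε • p) := by
    rw [hℓ, dotProduct_add, dotProduct_smul, smul_eq_mul, ← add_assoc]
    exact add_nonneg hlamP.ge (mul_nonneg hε.le hpp)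
  exact hconc.zero_lt_of_forall_le_of_lt ℓ (fun μ hμ => hmax μ hμ) hy hinc hstar

/-- The oracle's sign deduction (Algorithm 3): if a concave `φ` restricted to
the hyperplane `𝒫 = {λ : p₀ + pᵀλ = 0}` is maximized at `λ_𝒫`, and `φ` strictly
increases from `λ_𝒫` in the direction `p`, then every global maximizer of `φ`
lies strictly on the positive side of `𝒫`. -/
theorem stmt_13 (m : ℕ) (φ : (Fin m → ℝ) → ℝ)
    (hconc : ConcaveOn ℝ Set.univ φ)
    (p : Fin m → ℝ) (hp : p ≠ 0) (p0 : ℝ)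
    (lamP : Fin m → ℝ) (hlamP : p0 + ∑ j, p j * lamP j = 0)
    (hmax : ∀ μ : Fin m → ℝ, p0 + ∑ j, p j * μ j = 0 → φ μ ≤ φ lamP)
    (ε : ℝ) (hε : 0 < ε) (hinc : φ lamP < φ (lamP + ε • p)) :
    ∀ lamstar : Fin m → ℝ, (∀ μ : Fin m → ℝ, φ μ ≤ φ lamstar) →
      0 < p0 + ∑ j, p j * lamstar j :=
  stmt_13_general m φ hconc p p0 lamP hlamP hmax ε hε hinc
end

section
/- For i = 1,…,M let N_i ≥ 1, let I_{i,0} < I_{i,1} < … < I_{i,N_i} be real numbers, and let J̃_i : ℝ → ℝ be convex on [I_{i,0}, I_{i,N_i}] and piecewise quadratic: J̃_i(θ) = ½ h_{i,r} θ² + f_{i,r} θ + g_{i,r} whenever θ ∈ [I_{i,r−1}, I_{i,r}], with the non-degeneracy condition h_{i,r} > 0 ∨ (f_{i,r}, g_{i,r}) ≠ (f_{i,r+1}, g_{i,r+1}) for all r ∈ {1,…,N_i−1}. Let a_{i,j}, b_j ∈ ℝ for j = 1,…,m. Consider the separable quadratic program (P'): minimize Σ_{i=1}^{M} Σ_{r=1}^{N_i}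 [½ h_{i,r} θ_{i,r}² + (h_{i,r} I_{i,r−1} + f_{i,r}) θ_{i,r}] over variables θ_{i,r} subject to 0 ≤ θ_{i,r} ≤ I_{i,r} − I_{i,r−1} for all i, r, and Σ_{i=1}^{M} a_{i,j} (I_{i,0} + Σ_{r=1}^{N_i} θ_{i,r}) = b_j for j = 1,…,m. If (θ*_{i,r}) is an optimizer of (P'), then Θ* defined by Θ_i* := I_{i,0} + Σ_{r=1}^{N_i} θ*_{i,r} is an optimizer of the coordination problem (P): minimize Σ_{i=1}^{M} J̃_i(Θ_i) over Θ ∈ ℝ^M subject to I_{i,0} ≤ Θ_i ≤ I_{i,N_i} for all i and Σ_{i=1}^{M} a_{i,j} Θ_i = b_j for j = 1,…,m. -/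
/-!
On the piece `[I r, I (r + 1)]` the quadratic cost of (45) is the increment
`J̃ (I r + t) - J̃ (I r)`. Convexity makes the increments of `J̃` over intervals of fixed length
nondecreasing, so the cost of any feasible `θ` is at least `∑ i, (J̃_i (Θ_i) - J̃_i (I i 0))` for
`Θ_i = I i 0 + ∑ r, θ i r`, and filling the pieces from the left up to `Θ_i` attains this bound
with equality. Comparing `θ*` with the filling of an arbitrary feasible `Θ` gives the claim.
-/

open Finset Set

theorem ConvexOn.map_add_sub_map_le {s : Set ℝ} {J : ℝ → ℝ} (hJ : ConvexOn ℝ s J)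
    {x y t : ℝ} (hx : x ∈ s) (hyt : y + t ∈ s) (hxy : x ≤ y) (ht : 0 ≤ t) :
    J (x + t) - J x ≤ J (y + t) - J y := by
  rcases (show x ≤ y + t by linarith).eq_or_lt with _ | hlt
  · obtain rfl : t = 0 := by linarith
    obtain rfl : x = y := by linarith
    rfl
  -- `x + t` and `y` are convex combinations of `x`, `y + t` with swapped weights `1 - μ`, `μ`.
  set μ := t / (y + t - x) with hμ
  have hμd : μ * (y + t - x) = t := div_mul_cancel₀ t (sub_pos.2 hlt).ne'
  have hμ0 : 0 ≤ μ := div_nonneg ht (sub_pos.2 hlt).le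
  have hμ1 : μ ≤ 1 := by rw [hμ, div_le_one (sub_pos.2 hlt)]; linarith
  have h₁ := hJ.2 hx hyt (sub_nonneg.2 hμ1) hμ0 (sub_add_cancel 1 μ)
  have h₂ := hJ.2 hx hyt hμ0 (sub_nonneg.2 hμ1) (add_sub_cancel μ 1)
  simp only [smul_eq_mul] at h₁ h₂
  rw [show (1 - μ) * x + μ * (y + t) = x + t by linear_combination hμd] at h₁
  rw [show μ * x + (1 - μ) * (y + t) = y by linear_combination -hμd] at h₂
  linarith

theorem sum_range_mem_Icc_sub {n : ℕ} {I θ : ℕ → ℝ}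
    (hθ : ∀ r < n, 0 ≤ θ r ∧ θ r ≤ I (r + 1) - I r) :
    ∑ r ∈ range n, θ r ∈ Icc 0 (I n - I 0) := by
  refine ⟨sum_nonneg fun r hr => (hθ r (mem_range.1 hr)).1, ?_⟩
  calc ∑ r ∈ range n, θ r ≤ ∑ r ∈ range n, (I (r + 1) - I r) :=
        sum_le_sum fun r hr => (hθ r (mem_range.1 hr)).2
    _ = I n - I 0 := sum_range_sub I n

theorem ConvexOn.map_add_sum_sub_le {n : ℕ} {I θ : ℕ → ℝ} {J : ℝ → ℝ}
    (hJ : ConvexOn ℝ (Icc (I 0) (I n)) J) (hθ : ∀ r < n, 0 ≤ θ r ∧ θ r ≤ I (r + 1) - I r) :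
    J (I 0 + ∑ r ∈ range n, θ r) - J (I 0) ≤ ∑ r ∈ range n, (J (I r + θ r) - J (I r)) := by
  induction n with
  | zero => simp
  | succ n ih =>
    have hθn : ∀ r < n, 0 ≤ θ r ∧ θ r ≤ I (r + 1) - I r := fun r hr => hθ r (by omega)
    obtain ⟨hθ₀, hθ₁⟩ := hθ n (by omega)
    obtain ⟨hS₀, hS₁⟩ := sum_range_mem_Icc_sub hθn
    have hJn :=
      hJ.subset (Icc_subset_Icc_right (show I n ≤ I (n + 1) by linarith)) (convex_Icc _ _)
    have hinc := hJ.map_add_sub_map_le (x := I 0 + ∑ r ∈ range n, θ r) (y := I n)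
      ⟨by linarith, by linarith⟩ ⟨by linarith, by linarith⟩ (by linarith) hθ₀
    rw [sum_range_succ, sum_range_succ, ← add_assoc]
    linarith [ih hJn hθn]

theorem quadratic_increment {J : ℝ → ℝ} {u v c₂ c₁ c₀ : ℝ}
    (hJ : ∀ θ ∈ Icc u v, J θ = c₂ / 2 * θ ^ 2 + c₁ * θ + c₀) {t : ℝ} (ht : t ∈ Icc 0 (v - u)) :
    c₂ / 2 * t ^ 2 + (c₂ * u + c₁) * t = J (u + t) - J u := by
  rw [hJ (u + t) ⟨by linarith [ht.1], by linarith [ht.2]⟩,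
    hJ u ⟨le_rfl, by linarith [ht.1, ht.2]⟩]
  ring

def IsPiecewiseQuadratic (J : ℝ → ℝ) (I : ℕ → ℝ) (n : ℕ) (h f g : ℕ → ℝ) : Prop :=
  ∀ r < n, ∀ θ ∈ Icc (I r) (I (r + 1)), J θ = h r / 2 * θ ^ 2 + f r * θ + g r

noncomputable def pieceCost (I h f : ℕ → ℝ) (r : ℕ) (t : ℝ) : ℝ :=
  h r / 2 * t ^ 2 + (h r * I r + f r) * t

theorem IsPiecewiseQuadratic.pieceCost_eq {J : ℝ → ℝ} {I : ℕ → ℝ} {n : ℕ} {h f g : ℕ → ℝ}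
    (hJ : IsPiecewiseQuadratic J I n h f g) {r : ℕ} (hr : r < n) {t : ℝ}
    (ht : t ∈ Icc 0 (I (r + 1) - I r)) :
    pieceCost I h f r t = J (I r + t) - J (I r) :=
  quadratic_increment (hJ r hr) ht

theorem IsPiecewiseQuadratic.sub_le_sum_pieceCost {J : ℝ → ℝ} {I : ℕ → ℝ} {n : ℕ}
    {h f g : ℕ → ℝ} (hJ : IsPiecewiseQuadratic J I n h f g)
    (hconv : ConvexOn ℝ (Icc (I 0) (I n)) J) {θ : ℕ → ℝ}
    (hθ : ∀ r < n, 0 ≤ θ r ∧ θ r ≤ I (r + 1) - I r) :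
    J (I 0 + ∑ r ∈ range n, θ r) - J (I 0) ≤ ∑ r ∈ range n, pieceCost I h f r (θ r) := by
  rw [sum_congr rfl fun r hr => hJ.pieceCost_eq (mem_range.1 hr) (hθ r (mem_range.1 hr))]
  exact hconv.map_add_sum_sub_le hθ

def segmentFill (I : ℕ → ℝ) (x : ℝ) (r : ℕ) : ℝ := min x (I (r + 1)) - min x (I r)

section segmentFill

variable {I : ℕ → ℝ} {x : ℝ} {r : ℕ}

theorem segmentFill_mem_Icc (hI : I r ≤ I (r + 1)) :
    segmentFill I x r ∈ Icc 0 (I (r + 1) - I r) := by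
  unfold segmentFill
  constructor
  · exact sub_nonneg.2 (min_le_min le_rfl hI)
  · rcases le_total x (I r) with hx | hx
    · rw [min_eq_left hx, min_eq_left (hx.trans hI)]
      linarith
    · rw [min_eq_right hx]
      linarith [min_le_right x (I (r + 1))]

theorem sum_range_segmentFill {n : ℕ} (hx : x ∈ Icc (I 0) (I n)) :
    ∑ r ∈ range n, segmentFill I x r = x - I 0 := by
  simp only [segmentFill]
  rw [sum_range_sub (fun r => min x (I r)), min_eq_left hx.2, min_eq_right hx.1]

theorem segmentFill_eq_zero (hx : x ≤ I r) (hI : I r ≤ I (r + 1)) : segmentFill I x r = 0 := by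
  rw [segmentFill, min_eq_left hx, min_eq_left (hx.trans hI), sub_self]

theorem add_segmentFill (hx : I r ≤ x) : I r + segmentFill I x r = min x (I (r + 1)) := by
  rw [segmentFill, min_eq_right hx]
  ring

end segmentFill

theorem IsPiecewiseQuadratic.sum_pieceCost_segmentFill {J : ℝ → ℝ} {I : ℕ → ℝ} {n : ℕ}
    {h f g : ℕ → ℝ} (hJ : IsPiecewiseQuadratic J I n h f g) (hI : ∀ r < n, I r ≤ I (r + 1))
    {x : ℝ} (hx : x ∈ Icc (I 0) (I n)) :
    ∑ r ∈ range n, pieceCost I h f r (segmentFill I x r) = J x - J (I 0) := by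
  have hterm : ∀ r ∈ range n, pieceCost I h f r (segmentFill I x r) =
      J (min x (I (r + 1))) - J (min x (I r)) := by
    intro r hr
    have hr := mem_range.1 hr
    rw [hJ.pieceCost_eq hr (segmentFill_mem_Icc (hI r hr))]
    rcases le_total x (I r) with hxr | hxr
    · rw [segmentFill_eq_zero hxr (hI r hr), min_eq_left hxr, min_eq_left (hxr.trans (hI r hr)),
        add_zero, sub_self, sub_self]
    · rw [add_segmentFill hxr, min_eq_right hxr]
  rw [sum_congr rfl hterm, sum_range_sub (fun r => J (min x (I r))), min_eq_left hx.2,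
    min_eq_right hx.1]

/-- Pieces are 0-based: piece `r < N i` of `J̃_i` lives on `[I i r, I i (r + 1)]`. -/
theorem stmt_18_general (M m : ℕ)
    (N : Fin M → ℕ)
    (I : Fin M → ℕ → ℝ) (hI : ∀ i, ∀ r, r < N i → I i r < I i (r + 1))
    (Jt : Fin M → ℝ → ℝ)
    (hJtconv : ∀ i, ConvexOn ℝ (Set.Icc (I i 0) (I i (N i))) (Jt i))
    (h f g : Fin M → ℕ → ℝ)
    (hpw : ∀ i, ∀ r, r < N i → ∀ θ ∈ Set.Icc (I i r) (I i (r + 1)),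
      Jt i θ = h i r / 2 * θ ^ 2 + f i r * θ + g i r)
    (a : Fin M → Fin m → ℝ) (b : Fin m → ℝ)
    (θstar : Fin M → ℕ → ℝ)
    (hfeas : (∀ i, ∀ r, r < N i →
        0 ≤ θstar i r ∧ θstar i r ≤ I i (r + 1) - I i r) ∧
      ∀ j, ∑ i, a i j * (I i 0 + ∑ r ∈ Finset.range (N i), θstar i r) = b j)
    (hopt : ∀ θ : Fin M → ℕ → ℝ,
      ((∀ i, ∀ r, r < N i → 0 ≤ θ i r ∧ θ i r ≤ I i (r + 1) - I i r) ∧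
        ∀ j, ∑ i, a i j * (I i 0 + ∑ r ∈ Finset.range (N i), θ i r) = b j) →
      ∑ i, ∑ r ∈ Finset.range (N i),
          (h i r / 2 * θstar i r ^ 2 + (h i r * I i r + f i r) * θstar i r) ≤
        ∑ i, ∑ r ∈ Finset.range (N i),
          (h i r / 2 * θ i r ^ 2 + (h i r * I i r + f i r) * θ i r)) :
    (∀ i, I i 0 ≤ I i 0 + ∑ r ∈ Finset.range (N i), θstar i r ∧
        I i 0 + ∑ r ∈ Finset.range (N i), θstar i r ≤ I i (N i)) ∧
    (∀ j, ∑ i, a i j * (I i 0 + ∑ r ∈ Finset.range (N i), θstar i r) = b j) ∧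
    ∀ Θ : Fin M → ℝ,
      (∀ i, I i 0 ≤ Θ i ∧ Θ i ≤ I i (N i)) →
      (∀ j, ∑ i, a i j * Θ i = b j) →
      ∑ i, Jt i (I i 0 + ∑ r ∈ Finset.range (N i), θstar i r) ≤ ∑ i, Jt i (Θ i) := by
  obtain ⟨hbox, hlin⟩ := hfeas
  have hstep : ∀ i, ∀ r < N i, I i r ≤ I i (r + 1) := fun i r hr => (hI i r hr).le
  have hpq : ∀ i, IsPiecewiseQuadratic (Jt i) (I i) (N i) (h i) (f i) (g i) := hpw
  refine ⟨fun i => ?_, hlin, fun Θ hΘ hΘlin => ?_⟩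
  · obtain ⟨hS₀, hS₁⟩ := sum_range_mem_Icc_sub (hbox i)
    constructor <;> linarith
  have hfill : ∀ i, I i 0 + ∑ r ∈ range (N i), segmentFill (I i) (Θ i) r = Θ i := fun i => by
    rw [sum_range_segmentFill (hΘ i)]
    ring
  have hfillOpt := hopt (fun i => segmentFill (I i) (Θ i))
    ⟨fun i r hr => segmentFill_mem_Icc (hstep i r hr), by simpa only [hfill] using hΘlin⟩
  calc ∑ i, Jt i (I i 0 + ∑ r ∈ range (N i), θstar i r)
      = ∑ i, Jt i (I i 0) + ∑ i, (Jt i (I i 0 + ∑ r ∈ range (N i), θstar i r) - Jt i (I i 0)) := by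
        rw [← sum_add_distrib]
        simp only [add_sub_cancel]
    _ ≤ ∑ i, Jt i (I i 0) + ∑ i, ∑ r ∈ range (N i), pieceCost (I i) (h i) (f i) r (θstar i r) := by
        gcongr with i
        exact (hpq i).sub_le_sum_pieceCost (hJtconv i) (hbox i)
    _ ≤ ∑ i, Jt i (I i 0) +
        ∑ i, ∑ r ∈ range (N i), pieceCost (I i) (h i) (f i) r (segmentFill (I i) (Θ i) r) :=
        add_le_add le_rfl hfillOpt
    _ = ∑ i, Jt i (Θ i) := by
        rw [← sum_add_distrib]
        refine sum_congr rfl fun i _ => ?_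
        rw [(hpq i).sum_pieceCost_segmentFill (hstep i) (hΘ i)]
        ring

/-- The appendix reformulation: an optimizer of the transformed separable
quadratic program (45) yields, via `Θ_i* = I_{i,0} + Σ_r θ*_{i,r}` (46), an
optimizer of the coordination problem (11) with cost `Σ_i J̃_i(Θ_i)`.
(Pieces are 0-based: piece `r < N i` of `J̃_i` lives on `[I i r, I i (r+1)]`.) -/
theorem stmt_18 (M m : ℕ)
    (N : Fin M → ℕ) (hN : ∀ i, 1 ≤ N i)
    (I : Fin M → ℕ → ℝ) (hI : ∀ i, ∀ r, r < N i → I i r < I i (r + 1))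
    (Jt : Fin M → ℝ → ℝ)
    (hJtconv : ∀ i, ConvexOn ℝ (Set.Icc (I i 0) (I i (N i))) (Jt i))
    (h f g : Fin M → ℕ → ℝ)
    (hpw : ∀ i, ∀ r, r < N i → ∀ θ ∈ Set.Icc (I i r) (I i (r + 1)),
      Jt i θ = h i r / 2 * θ ^ 2 + f i r * θ + g i r)
    (hnondeg : ∀ i, ∀ r, r + 1 < N i →
      0 < h i r ∨ (f i r, g i r) ≠ (f i (r + 1), g i (r + 1)))
    (a : Fin M → Fin m → ℝ) (b : Fin m → ℝ)
    (θstar : Fin M → ℕ → ℝ)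
    (hfeas : (∀ i, ∀ r, r < N i →
        0 ≤ θstar i r ∧ θstar i r ≤ I i (r + 1) - I i r) ∧
      ∀ j, ∑ i, a i j * (I i 0 + ∑ r ∈ Finset.range (N i), θstar i r) = b j)
    (hopt : ∀ θ : Fin M → ℕ → ℝ,
      ((∀ i, ∀ r, r < N i → 0 ≤ θ i r ∧ θ i r ≤ I i (r + 1) - I i r) ∧
        ∀ j, ∑ i, a i j * (I i 0 + ∑ r ∈ Finset.range (N i), θ i r) = b j) →
      ∑ i, ∑ r ∈ Finset.range (N i),
          (h i r / 2 * θstar i r ^ 2 + (h i r * I i r + f i r) * θstar i r) ≤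
        ∑ i, ∑ r ∈ Finset.range (N i),
          (h i r / 2 * θ i r ^ 2 + (h i r * I i r + f i r) * θ i r)) :
    (∀ i, I i 0 ≤ I i 0 + ∑ r ∈ Finset.range (N i), θstar i r ∧
        I i 0 + ∑ r ∈ Finset.range (N i), θstar i r ≤ I i (N i)) ∧
    (∀ j, ∑ i, a i j * (I i 0 + ∑ r ∈ Finset.range (N i), θstar i r) = b j) ∧
    ∀ Θ : Fin M → ℝ,
      (∀ i, I i 0 ≤ Θ i ∧ Θ i ≤ I i (N i)) →
      (∀ j, ∑ i, a i j * Θ i = b j) →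
      ∑ i, Jt i (I i 0 + ∑ r ∈ Finset.range (N i), θstar i r) ≤ ∑ i, Jt i (Θ i) :=
  stmt_18_general M m N I hI Jt hJtconv h f g hpw a b θstar hfeas hopt
end
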